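/- Let k ≥ 2 and let M be the k×k matrix defined below. Then the characteristic polynomial of M equals ∏_{i=1}^{k} (X + i(i−1)/2); in particular the eigenvalues of M are exactly −i(i−1)/2 for i = 1,…,k, they are pairwise distinct, and M is diagonalizable over ℝ. Moreover, the vector (1, 1, …, 1) is an eigenvector of M for the eigenvalue 0, i.e. M·(1,…,1)ᵀ = 0. -/
import Mathlib


open Matrix Polynomial

/-- `σᵢ = i(k-i)/2` (so that `σ₀ = σ_k = 0`). -/
noncomputable def sig (k i : ℕ) : ℝ := (i : ℝ) * ((k : ℝ) - (i : ℝ)) / 2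

/-- The `k×k` symmetric tridiagonal matrix `M`, indexed by `Fin k` (0-based): in 1-based
notation, `M_{i,i} = -(σ_{i-1} + σ_i)` and `M_{i,i+1} = M_{i+1,i} = σ_i`. -/
noncomputable def Mmat (k : ℕ) : Matrix (Fin k) (Fin k) ℝ :=
  Matrix.of fun a b =>
    if a = b then -(sig k (a : ℕ) + sig k ((a : ℕ) + 1))
    else if (a : ℕ) + 1 = (b : ℕ) then sig k ((a : ℕ) + 1)
    else if (b : ℕ) + 1 = (a : ℕ) then sig k ((b : ℕ) + 1)
    else 0

namespace Stmt13

/-- coefficient of `x^e` in `x^m - (x-1)^m` -/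
noncomputable def dcoef (m e : ℕ) : ℝ :=
  (if e = m then 1 else 0) - (-1 : ℝ) ^ (m - e) * (m.choose e)

lemma dcoef_eq_zero {m e : ℕ} (h : m ≤ e) : dcoef m e = 0 := by
  rcases eq_or_lt_of_le h with rfl | h
  · simp [dcoef]
  · have h1 : e ≠ m := by omega
    have h2 : m - e = 0 := by omega
    simp [dcoef, h1, h2, Nat.choose_eq_zero_of_lt h]

lemma dcoef_succ (m : ℕ) : dcoef (m + 1) m = (m : ℝ) + 1 := by
  have h1 : m ≠ m + 1 := by omega
  have h2 : m + 1 - m = 1 := by omega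
  simp [dcoef, h1, h2, Nat.choose_succ_self_right]

lemma sum_choose (d : ℕ) (y : ℝ) :
    ∑ j ∈ Finset.range d, (d.choose j : ℝ) * y ^ j = (y + 1) ^ d - y ^ d := by
  have h := add_pow y 1 d
  rw [Finset.sum_range_succ] at h
  simp only [one_pow, mul_one, Nat.choose_self, Nat.cast_one] at h
  rw [Finset.sum_congr rfl (fun j _ => mul_comm ((d.choose j : ℝ)) (y ^ j))]
  linarith [h]

lemma sum_dcoef {k m : ℕ} (hm : m ≤ k) (x : ℝ) :
    ∑ e ∈ Finset.range k, dcoef m e * x ^ e = x ^ m - (x - 1) ^ m := by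
  have key : ∑ e ∈ Finset.range (m + 1), dcoef m e * x ^ e = x ^ m - (x - 1) ^ m := by
    have h := add_pow x (-1 : ℝ) m
    have hsub : (x - 1) ^ m = ∑ e ∈ Finset.range (m + 1), x ^ e * (-1 : ℝ) ^ (m - e) * (m.choose e) := by
      rw [← h]; ring_nf
    rw [hsub]
    rw [Finset.sum_congr rfl (fun e _ => show dcoef m e * x ^ e
        = (if e = m then x ^ e else 0) - x ^ e * (-1 : ℝ) ^ (m - e) * (m.choose e) by
      unfold dcoef; split_ifs <;> ring)]
    rw [Finset.sum_sub_distrib, Finset.sum_ite_eq' (Finset.range (m+1)) m (fun e => x ^ e)]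
    simp
  have h1 : ∑ e ∈ Finset.range (m + 1), dcoef m e * x ^ e
      = ∑ e ∈ Finset.range (k + 1), dcoef m e * x ^ e := by
    apply Finset.sum_subset (Finset.range_subset_range.mpr (by omega))
    intro e he hne
    rw [dcoef_eq_zero (by simp only [Finset.mem_range] at hne ⊢; omega), zero_mul]
  have h2 : ∑ e ∈ Finset.range k, dcoef m e * x ^ e
      = ∑ e ∈ Finset.range (k + 1), dcoef m e * x ^ e := by
    apply Finset.sum_subset (Finset.range_subset_range.mpr (by omega))
    intro e he hne
    rw [dcoef_eq_zero (by simp only [Finset.mem_range] at hne; omega), zero_mul]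
  rw [h2, ← h1, key]

lemma sig_zero (k : ℕ) : sig k 0 = 0 := by simp [sig]

lemma sig_self (k : ℕ) : sig k k = 0 := by simp [sig]

lemma row_sum (k : ℕ) (a : Fin k) (G : ℕ → ℝ) :
    ∑ b : Fin k, Mmat k a b * G (b : ℕ)
      = sig k ((a : ℕ) + 1) * G ((a : ℕ) + 1)
        - (sig k (a : ℕ) + sig k ((a : ℕ) + 1)) * G (a : ℕ)
        + sig k (a : ℕ) * G ((a : ℕ) - 1) := by
  have hsplit : ∀ b : Fin k, Mmat k a b * G (b : ℕ)
      = (if a = b then -(sig k (a : ℕ) + sig k ((a : ℕ) + 1)) * G (b : ℕ) else 0)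
        + ((if (a : ℕ) + 1 = (b : ℕ) then sig k ((a : ℕ) + 1) * G (b : ℕ) else 0)
        + (if (b : ℕ) + 1 = (a : ℕ) then sig k ((b : ℕ) + 1) * G (b : ℕ) else 0)) := by
    intro b
    unfold Mmat
    simp only [Matrix.of_apply]
    rcases eq_or_ne a b with rfl | h1
    · have h2 : ¬((a : ℕ) + 1 = (a : ℕ)) := by omega
      simp [h2]
    · have hv : (a : ℕ) ≠ (b : ℕ) := fun h => h1 (Fin.ext h)
      by_cases h2 : (a : ℕ) + 1 = (b : ℕ)
      · have h3 : ¬((b : ℕ) + 1 = (a : ℕ)) := by omega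
        simp [h1, h2, h3]
      · by_cases h3 : (b : ℕ) + 1 = (a : ℕ)
        · simp [h1, h2, h3]
        · simp [h1, h2, h3]
  rw [Finset.sum_congr rfl (fun b _ => hsplit b), Finset.sum_add_distrib,
    Finset.sum_add_distrib]
  have S1 : ∑ b : Fin k, (if a = b then -(sig k (a : ℕ) + sig k ((a : ℕ) + 1)) * G (b : ℕ) else 0)
      = -(sig k (a : ℕ) + sig k ((a : ℕ) + 1)) * G (a : ℕ) := by
    rw [Fintype.sum_eq_single a (fun b hb => if_neg (fun h => hb h.symm))]
    simp
  have S2 : ∑ b : Fin k, (if (a : ℕ) + 1 = (b : ℕ) then sig k ((a : ℕ) + 1) * G (b : ℕ) else 0)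
      = sig k ((a : ℕ) + 1) * G ((a : ℕ) + 1) := by
    by_cases hak : (a : ℕ) + 1 < k
    · rw [Fintype.sum_eq_single (⟨(a : ℕ) + 1, hak⟩ : Fin k) (fun b hb => if_neg (fun h => by
        exact hb (Fin.ext (by simpa using h.symm))))]
      simp
    · have hak' : (a : ℕ) + 1 = k := by have := a.isLt; omega
      rw [Finset.sum_eq_zero (fun b _ => if_neg (fun h => by have := b.isLt; omega))]
      rw [hak', sig_self]
      ring
  have S3 : ∑ b : Fin k, (if (b : ℕ) + 1 = (a : ℕ) then sig k ((b : ℕ) + 1) * G (b : ℕ) else 0)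
      = sig k (a : ℕ) * G ((a : ℕ) - 1) := by
    by_cases h0 : (a : ℕ) = 0
    · rw [Finset.sum_eq_zero (fun b _ => if_neg (fun h => by omega))]
      rw [h0, sig_zero]
      ring
    · have hlt : (a : ℕ) - 1 < k := by have := a.isLt; omega
      rw [Fintype.sum_eq_single (⟨(a : ℕ) - 1, hlt⟩ : Fin k) (fun b hb => if_neg (fun h => by
        exact hb (Fin.ext (by simp; omega))))]
      have h1 : ((⟨(a : ℕ) - 1, hlt⟩ : Fin k) : ℕ) + 1 = (a : ℕ) := by simp; omega
      rw [if_pos h1, h1]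
  rw [S1, S2, S3]
  ring

noncomputable def Tmat (k : ℕ) : Matrix (Fin k) (Fin k) ℝ :=
  Matrix.of fun e d =>
    ∑ j ∈ Finset.range (d : ℕ), ((d : ℕ).choose j : ℝ) / 2
      * ((k : ℝ) * dcoef (j + 1) (e : ℕ) - dcoef (j + 2) (e : ℕ))

lemma Tmat_triangular (k : ℕ) : (Tmat k).BlockTriangular id := by
  intro e d h
  simp only [id_eq] at h
  unfold Tmat
  simp only [Matrix.of_apply]
  apply Finset.sum_eq_zero
  intro j hj
  simp only [Finset.mem_range] at hj
  have he : (d : ℕ) < (e : ℕ) := h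
  rw [dcoef_eq_zero (by omega), dcoef_eq_zero (by omega)]
  ring

lemma Tmat_diag (k : ℕ) (d : Fin k) :
    Tmat k d d = -((d : ℝ) * ((d : ℕ) + 1 : ℝ) / 2) := by
  unfold Tmat
  simp only [Matrix.of_apply]
  rcases Nat.eq_zero_or_pos (d : ℕ) with h0 | h0
  · rw [h0]
    simp
  · rw [Finset.sum_eq_single ((d : ℕ) - 1)]
    · have h1 : (d : ℕ) - 1 + 1 = (d : ℕ) := by omega
      have h2 : (d : ℕ) - 1 + 2 = (d : ℕ) + 1 := by omega
      rw [h1, h2, dcoef_eq_zero (le_refl _), dcoef_succ]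
      have h3 : ((d : ℕ).choose ((d : ℕ) - 1) : ℝ) = (d : ℕ) := by
        rw [show (d : ℕ) - 1 = (d : ℕ) - 1 from rfl, Nat.choose_symm h0, Nat.choose_one_right]
      rw [h3]
      ring
    · intro j hj hne
      simp only [Finset.mem_range] at hj
      rw [dcoef_eq_zero (by omega), dcoef_eq_zero (by omega)]
      ring
    · intro h
      exact absurd (Finset.mem_range.mpr (by omega)) h

lemma sum_sig (k d : ℕ) (z : ℝ) :
    ∑ j ∈ Finset.range d, (d.choose j : ℝ) / 2 * ((k : ℝ) * z ^ (j + 1) - z ^ (j + 2))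
      = z * ((k : ℝ) - z) / 2 * ((z + 1) ^ d - z ^ d) := by
  rw [Finset.sum_congr rfl (fun j _ => show (d.choose j : ℝ) / 2 * ((k : ℝ) * z ^ (j + 1) - z ^ (j + 2))
      = z * ((k : ℝ) - z) / 2 * ((d.choose j : ℝ) * z ^ j) by ring)]
  rw [← Finset.mul_sum, sum_choose]

lemma MV_eq_VT (k : ℕ) :
    Mmat k * Matrix.vandermonde (fun a : Fin k => ((a : ℕ) : ℝ) + 1)
      = Matrix.vandermonde (fun a : Fin k => ((a : ℕ) : ℝ) + 1) * Tmat k := by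
  ext a d
  have hd : (d : ℕ) < k := d.isLt
  set x : ℝ := ((a : ℕ) : ℝ) + 1 with hx
  have hR : (Matrix.vandermonde (fun a : Fin k => ((a : ℕ) : ℝ) + 1) * Tmat k) a d
      = x * ((k : ℝ) - x) / 2 * ((x + 1) ^ (d : ℕ) - x ^ (d : ℕ))
        - (x - 1) * ((k : ℝ) - (x - 1)) / 2 * (x ^ (d : ℕ) - (x - 1) ^ (d : ℕ)) := by
    rw [Matrix.mul_apply]
    have h1 : ∀ b : Fin k, Matrix.vandermonde (fun a : Fin k => ((a : ℕ) : ℝ) + 1) a b * Tmat k b d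
        = ∑ j ∈ Finset.range (d : ℕ), ((d : ℕ).choose j : ℝ) / 2 *
            ((k : ℝ) * (dcoef (j + 1) (b : ℕ) * x ^ (b : ℕ)) - dcoef (j + 2) (b : ℕ) * x ^ (b : ℕ)) := by
      intro b
      rw [Matrix.vandermonde_apply]
      unfold Tmat
      simp only [Matrix.of_apply]
      rw [Finset.mul_sum]
      exact Finset.sum_congr rfl (fun j _ => by ring)
    rw [Finset.sum_congr rfl (fun b _ => h1 b), Finset.sum_comm]
    have h2 : ∀ j ∈ Finset.range (d : ℕ),
        (∑ b : Fin k, ((d : ℕ).choose j : ℝ) / 2 *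
          ((k : ℝ) * (dcoef (j + 1) (b : ℕ) * x ^ (b : ℕ)) - dcoef (j + 2) (b : ℕ) * x ^ (b : ℕ)))
        = ((d : ℕ).choose j : ℝ) / 2 *
            ((k : ℝ) * (x ^ (j + 1) - (x - 1) ^ (j + 1)) - (x ^ (j + 2) - (x - 1) ^ (j + 2))) := by
      intro j hj
      simp only [Finset.mem_range] at hj
      have e1 : ∑ b : Fin k, dcoef (j + 1) (b : ℕ) * x ^ (b : ℕ) = x ^ (j + 1) - (x - 1) ^ (j + 1) := by
        rw [Fin.sum_univ_eq_sum_range (fun e => dcoef (j + 1) e * x ^ e) k]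
        exact sum_dcoef (by omega) x
      have e2 : ∑ b : Fin k, dcoef (j + 2) (b : ℕ) * x ^ (b : ℕ) = x ^ (j + 2) - (x - 1) ^ (j + 2) := by
        rw [Fin.sum_univ_eq_sum_range (fun e => dcoef (j + 2) e * x ^ e) k]
        exact sum_dcoef (by omega) x
      rw [← e1, ← e2, ← Finset.mul_sum, Finset.sum_sub_distrib, ← Finset.mul_sum]
    rw [Finset.sum_congr rfl h2]
    rw [Finset.sum_congr rfl (fun j (hj : j ∈ Finset.range (d : ℕ)) =>
      show ((d : ℕ).choose j : ℝ) / 2 *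
            ((k : ℝ) * (x ^ (j + 1) - (x - 1) ^ (j + 1)) - (x ^ (j + 2) - (x - 1) ^ (j + 2)))
          = ((d : ℕ).choose j : ℝ) / 2 * ((k : ℝ) * x ^ (j + 1) - x ^ (j + 2))
            - ((d : ℕ).choose j : ℝ) / 2 * ((k : ℝ) * (x - 1) ^ (j + 1) - (x - 1) ^ (j + 2)) by ring)]
    rw [Finset.sum_sub_distrib, sum_sig, sum_sig]
    ring_nf
  have hG := row_sum k a (fun n : ℕ => ((n : ℝ) + 1) ^ (d : ℕ))
  have hL : (Mmat k * Matrix.vandermonde (fun a : Fin k => ((a : ℕ) : ℝ) + 1)) a d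
      = sig k ((a : ℕ) + 1) * ((((a : ℕ) + 1 : ℕ) : ℝ) + 1) ^ (d : ℕ)
        - (sig k (a : ℕ) + sig k ((a : ℕ) + 1)) * x ^ (d : ℕ)
        + sig k (a : ℕ) * (((((a : ℕ) - 1 : ℕ)) : ℝ) + 1) ^ (d : ℕ) := by
    rw [Matrix.mul_apply]
    rw [Finset.sum_congr rfl (fun b _ => by rw [Matrix.vandermonde_apply])]
    exact hG
  rw [hL, hR]
  unfold sig
  by_cases h0 : (a : ℕ) = 0
  · rw [h0]
    norm_num [hx, h0]
    ring
  · have h1 : ((((a : ℕ) - 1 : ℕ)) : ℝ) = ((a : ℕ) : ℝ) - 1 := by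
      rw [Nat.cast_sub (by omega)]
      norm_num
    rw [h1]
    push_cast
    ring

lemma charpoly_conj {n : Type*} [Fintype n] [DecidableEq n]
    (V T : Matrix n n ℝ) (hV : IsUnit V.det) :
    (V * T * V⁻¹).charpoly = T.charpoly := by
  have hinv : V * V⁻¹ = 1 := Matrix.mul_nonsing_inv V hV
  set f : Matrix n n ℝ →+* Matrix n n ℝ[X] := (Polynomial.C (R := ℝ)).mapMatrix with hf
  have hc : f V * f V⁻¹ = 1 := by rw [← _root_.map_mul f, hinv, _root_.map_one f]
  have hs : f V * Matrix.scalar n (X : ℝ[X]) * f V⁻¹ = Matrix.scalar n (X : ℝ[X]) := by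
    rw [← (Matrix.scalar_commute (X : ℝ[X]) (Commute.all _) (f V)).eq, mul_assoc, hc, mul_one]
  have key : Matrix.charmatrix (V * T * V⁻¹) = f V * Matrix.charmatrix T * f V⁻¹ := by
    unfold Matrix.charmatrix
    rw [Matrix.mul_sub, Matrix.sub_mul, hs]
    congr 1
    show f (V * T * V⁻¹) = _
    rw [_root_.map_mul f, _root_.map_mul f]
  rw [Matrix.charpoly, key, Matrix.det_mul, Matrix.det_mul, Matrix.charpoly]
  have hd : (f V).det * (f V⁻¹).det = 1 := by
    rw [← Matrix.det_mul, hc, Matrix.det_one]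
  calc (f V).det * (Matrix.charmatrix T).det * (f V⁻¹).det
      = (Matrix.charmatrix T).det * ((f V).det * (f V⁻¹).det) := by ring
    _ = (Matrix.charmatrix T).det := by rw [hd, mul_one]

lemma Mmat_hermitian (k : ℕ) : (Mmat k).IsHermitian := by
  show (Mmat k)ᴴ = Mmat k
  ext i j
  rw [Matrix.conjTranspose_apply, star_trivial]
  unfold Mmat
  simp only [Matrix.of_apply]
  by_cases h1 : i = j
  · subst h1; simp
  · have h1' : ¬ j = i := fun h => h1 h.symm
    by_cases h2 : (i : ℕ) + 1 = (j : ℕ)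
    · have h3 : ¬((j : ℕ) + 1 = (i : ℕ)) := by omega
      simp [h1, h1', h2, h3]
    · by_cases h3 : (j : ℕ) + 1 = (i : ℕ)
      · simp [h1, h1', h2, h3]
      · simp [h1, h1', h2, h3]

lemma charpoly_M (k : ℕ) :
    (Mmat k).charpoly = ∏ i ∈ Finset.range k, (X + C (((i : ℝ) + 1) * (i : ℝ) / 2)) := by
  have hinj : Function.Injective (fun a : Fin k => ((a : ℕ) : ℝ) + 1) := by
    intro a b h
    simp only [add_left_inj, Nat.cast_inj] at h
    exact Fin.ext h
  have hV : IsUnit (Matrix.vandermonde (fun a : Fin k => ((a : ℕ) : ℝ) + 1)).det :=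
    isUnit_iff_ne_zero.mpr (Matrix.det_vandermonde_ne_zero_iff.mpr hinj)
  set V := Matrix.vandermonde (fun a : Fin k => ((a : ℕ) : ℝ) + 1) with hVdef
  have hM : Mmat k = V * Tmat k * V⁻¹ := by
    rw [← MV_eq_VT, Matrix.mul_assoc, Matrix.mul_nonsing_inv V hV, Matrix.mul_one]
  rw [hM, charpoly_conj _ _ hV,
    Matrix.charpoly_of_upperTriangular (Tmat k) (Tmat_triangular k)]
  rw [Finset.prod_congr rfl (fun d (_ : d ∈ Finset.univ) => show
      (X : ℝ[X]) - C (Tmat k d d) = (fun i : ℕ => (X : ℝ[X]) + C (((i : ℝ) + 1) * (i : ℝ) / 2)) (d : ℕ) by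
    rw [Tmat_diag k d]
    rw [show -((d : ℝ) * ((d : ℕ) + 1 : ℝ) / 2) = -((((d : ℕ) : ℝ) + 1) * ((d : ℕ) : ℝ) / 2) by ring]
    rw [map_neg, sub_neg_eq_add])]
  exact Fin.prod_univ_eq_prod_range (fun i : ℕ => (X : ℝ[X]) + C (((i : ℝ) + 1) * (i : ℝ) / 2)) k

lemma eval_charpoly_M (k : ℕ) (x : ℝ) :
    (Mmat k).charpoly.eval x = (algebraMap ℝ (Matrix (Fin k) (Fin k) ℝ) x - Mmat k).det := by
  rw [Matrix.charpoly, ← Polynomial.coe_evalRingHom, RingHom.map_det]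
  congr 1
  ext i j
  by_cases h : i = j
  · subst h
    simp [Matrix.charmatrix_apply_eq, Matrix.algebraMap_matrix_apply, Matrix.map_apply,
      Matrix.sub_apply]
  · simp [Matrix.charmatrix_apply_ne _ _ _ h, Matrix.map_apply, Matrix.sub_apply,
      Matrix.algebraMap_matrix_apply, h]

lemma spectrum_M (k : ℕ) :
    spectrum ℝ (Mmat k)
      = (fun i : ℕ => -((i : ℝ) * ((i : ℝ) - 1) / 2)) '' Set.Icc 1 k := by
  ext x
  rw [spectrum.mem_iff, Matrix.isUnit_iff_isUnit_det, isUnit_iff_ne_zero, not_not,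
    ← eval_charpoly_M, charpoly_M, Polynomial.eval_prod]
  simp only [Polynomial.eval_add, Polynomial.eval_X, Polynomial.eval_C]
  rw [Finset.prod_eq_zero_iff]
  constructor
  · rintro ⟨i, hi, hzero⟩
    simp only [Finset.mem_range] at hi
    refine ⟨i + 1, Set.mem_Icc.mpr ⟨by omega, by omega⟩, ?_⟩
    push_cast
    linarith
  · rintro ⟨i, hi, rfl⟩
    rw [Set.mem_Icc] at hi
    refine ⟨i - 1, Finset.mem_range.mpr (by omega), ?_⟩
    have h1 : ((i - 1 : ℕ) : ℝ) = (i : ℝ) - 1 := by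
      rw [Nat.cast_sub (by omega)]; norm_num
    rw [h1]
    ring

lemma injOn_M (k : ℕ) :
    Set.InjOn (fun i : ℕ => -((i : ℝ) * ((i : ℝ) - 1) / 2)) (Set.Icc 1 k) := by
  intro i hi j hj h
  simp only [Set.mem_Icc] at hi hj
  simp only at h
  have key : (i : ℝ) * ((i : ℝ) - 1) = (j : ℝ) * ((j : ℝ) - 1) := by linarith
  rcases lt_trichotomy i j with hlt | he | hlt
  · exfalso
    have h1 : (1 : ℝ) ≤ (i : ℝ) := by exact_mod_cast hi.1
    have h2 : (i : ℝ) < (j : ℝ) := by exact_mod_cast hlt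
    nlinarith
  · exact he
  · exfalso
    have h1 : (1 : ℝ) ≤ (j : ℝ) := by exact_mod_cast hj.1
    have h2 : (j : ℝ) < (i : ℝ) := by exact_mod_cast hlt
    nlinarith

lemma diagonalizable_M (k : ℕ) :
    ∃ (P : Matrix (Fin k) (Fin k) ℝ) (D : Fin k → ℝ),
      IsUnit P.det ∧ Mmat k = P * Matrix.diagonal D * P⁻¹ := by
  have hherm := Mmat_hermitian k
  set U : Matrix (Fin k) (Fin k) ℝ := (hherm.eigenvectorUnitary : Matrix (Fin k) (Fin k) ℝ)
    with hU
  have hU1 : U * star U = 1 := Matrix.mem_unitaryGroup_iff.mp hherm.eigenvectorUnitary.2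
  refine ⟨U, hherm.eigenvalues, Matrix.isUnit_det_of_right_inverse hU1, ?_⟩
  rw [Matrix.inv_eq_right_inv hU1]
  have hst := hherm.spectral_theorem
  simpa using hst

lemma mulVec_one_M (k : ℕ) : (Mmat k).mulVec (fun _ => 1) = 0 := by
  funext a
  show ∑ b : Fin k, Mmat k a b * 1 = 0
  rw [row_sum k a (fun _ => (1 : ℝ))]
  ring

end Stmt13


/-- the characteristic polynomial of `M` is `∏_{i=1}^k (X + i(i-1)/2)`;
the eigenvalues of `M` are exactly `-i(i-1)/2` for `i = 1,…,k`, they are pairwise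
distinct, `M` is diagonalizable over `ℝ`, and `(1,…,1)` is an eigenvector for the
eigenvalue `0`, i.e. `M · (1,…,1)ᵀ = 0`. -/
theorem stmt13 (k : ℕ) (hk : 2 ≤ k) :
    (Mmat k).charpoly
        = ∏ i ∈ Finset.range k, (X + C (((i : ℝ) + 1) * (i : ℝ) / 2)) ∧
    spectrum ℝ (Mmat k)
        = (fun i : ℕ => -((i : ℝ) * ((i : ℝ) - 1) / 2)) '' Set.Icc 1 k ∧
    Set.InjOn (fun i : ℕ => -((i : ℝ) * ((i : ℝ) - 1) / 2)) (Set.Icc 1 k) ∧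
    (∃ (P : Matrix (Fin k) (Fin k) ℝ) (D : Fin k → ℝ),
      IsUnit P.det ∧ Mmat k = P * Matrix.diagonal D * P⁻¹) ∧
    (Mmat k).mulVec (fun _ => 1) = 0 := by
  exact ⟨Stmt13.charpoly_M k, Stmt13.spectrum_M k, Stmt13.injOn_M k,
    Stmt13.diagonalizable_M k, Stmt13.mulVec_one_M k⟩
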